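/- arXiv:2007.10041 — 2 statements merged into one kernel-verified Lean document; each statement's English description precedes it below -/
import Mathlib

section
/- Let Q be a convex quadrilateral with vertices a, b, c, d in counterclockwise order, and for t ∈ [0,1] let I_t be the segment from a_t = (1−t)a + tb to c_t = (1−t)d + tc. Then the angle θ(t) between segment [a,b] and segment I_t is a monotone function of t on [0,1]. Consequently, if every angle of Q lies within θ of 90°, then both sub-quadrilaterals obtained by cutting Q along any I_t also have all angles within θ of 90°. -/
/-!
Put `v t = c_t - a_t = (1 - t) • (d - a) + t • (c - b)`. Convexity puts `d - a` and `c - b`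
strictly to the left of `b - a`, hence so is every `v t`, and there the angle from `b - a` to
`v t` is `π / 2 - arctan (⟪b - a, v t⟫ / cross2 (b - a) (v t))`: an arctangent of a quotient of
two affine functions of `t`, which is monotone. The same holds for the angle between `d - c` and
`-v t`. Every angle of the two pieces is an angle of `Q`, one of these two angles, or a
supplement of one; and by monotonicity these two angles lie between their values at `t = 0`
and `t = 1`, which are angles of `Q` or their supplements.
-/

open Real EuclideanGeometry

/-- Cross product (determinant) of two planar vectors. -/
def cross2 (u v : EuclideanSpace ℝ (Fin 2)) : ℝ := u 0 * v 1 - u 1 * v 0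

open Set InnerProductSpace

theorem monotoneOn_or_antitoneOn_affine_div_affine {s : Set ℝ} {A B C D : ℝ}
    (hpos : ∀ t ∈ s, 0 < (1 - t) * C + t * D) :
    MonotoneOn (fun t => ((1 - t) * A + t * B) / ((1 - t) * C + t * D)) s ∨
      AntitoneOn (fun t => ((1 - t) * A + t * B) / ((1 - t) * C + t * D)) s := by
  -- the cross-multiplied difference of two values at `t ≤ t'` is `(t' - t) * (B * C - A * D)`
  rcases le_total 0 (B * C - A * D) with hK | hK
  · refine .inl fun t ht t' ht' htt' => ?_
    rw [div_le_div_iff₀ (hpos t ht) (hpos t' ht')]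
    nlinarith [mul_nonneg (sub_nonneg.2 htt') hK]
  · refine .inr fun t ht t' ht' htt' => ?_
    rw [div_le_div_iff₀ (hpos t' ht') (hpos t ht)]
    nlinarith [mul_nonneg (sub_nonneg.2 htt') (neg_nonneg.2 hK)]

theorem mem_of_monotoneOn_or_antitoneOn_Icc {α β : Type*} [LinearOrder α] [LinearOrder β]
    {f : α → β} {a b t : α} {S : Set β} [S.OrdConnected]
    (hf : MonotoneOn f (Icc a b) ∨ AntitoneOn f (Icc a b)) (ht : t ∈ Icc a b)
    (ha : f a ∈ S) (hb : f b ∈ S) : f t ∈ S :=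
  OrdConnected.uIcc_subset ‹_› ha hb <|
    hf.elim (fun h => Icc_subset_uIcc (h.mapsTo_Icc ht)) fun h => Icc_subset_uIcc' (h.mapsTo_Icc ht)

theorem EuclideanSpace.real_inner_fin_two (u v : EuclideanSpace ℝ (Fin 2)) :
    ⟪u, v⟫_ℝ = u 0 * v 0 + u 1 * v 1 := by
  simp [PiLp.inner_apply, Fin.sum_univ_two, mul_comm]

theorem cross2_add_smul_right (u w₀ w₁ : EuclideanSpace ℝ (Fin 2)) (s t : ℝ) :
    cross2 u (s • w₀ + t • w₁) = s * cross2 u w₀ + t * cross2 u w₁ := by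
  simp only [cross2, PiLp.add_apply, PiLp.smul_apply, smul_eq_mul]
  ring

theorem cross2_eq_cross2_neg (u v : EuclideanSpace ℝ (Fin 2)) : cross2 u v = cross2 (-v) u := by
  simp only [cross2, PiLp.neg_apply]
  ring

theorem real_inner_sq_add_cross2_sq (u v : EuclideanSpace ℝ (Fin 2)) :
    ⟪u, v⟫_ℝ ^ 2 + cross2 u v ^ 2 = (‖u‖ * ‖v‖) ^ 2 := by
  rw [mul_pow, EuclideanSpace.real_norm_sq_eq, EuclideanSpace.real_norm_sq_eq,
    EuclideanSpace.real_inner_fin_two, cross2]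
  simp only [Fin.sum_univ_two]
  ring

theorem angle_eq_pi_div_two_sub_arctan {u v : EuclideanSpace ℝ (Fin 2)} (h : 0 < cross2 u v) :
    InnerProductGeometry.angle u v = π / 2 - arctan (⟪u, v⟫_ℝ / cross2 u v) := by
  have hnorm : ‖u‖ * ‖v‖ = √(⟪u, v⟫_ℝ ^ 2 + cross2 u v ^ 2) := by
    rw [real_inner_sq_add_cross2_sq, sqrt_sq (by positivity)]
  have hsqrt : √(1 + (⟪u, v⟫_ℝ / cross2 u v) ^ 2) = ‖u‖ * ‖v‖ / cross2 u v := by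
    rw [show 1 + (⟪u, v⟫_ℝ / cross2 u v) ^ 2 = (⟪u, v⟫_ℝ ^ 2 + cross2 u v ^ 2) / cross2 u v ^ 2 by
      field_simp; ring, sqrt_div' _ (sq_nonneg _), sqrt_sq h.le, hnorm]
  rw [InnerProductGeometry.angle, arccos_eq_pi_div_two_sub_arcsin, arctan_eq_arcsin, hsqrt,
    div_div_div_cancel_right₀ h.ne']

theorem monotoneOn_or_antitoneOn_angle_segment {u w₀ w₁ : EuclideanSpace ℝ (Fin 2)}
    (h₀ : 0 < cross2 u w₀) (h₁ : 0 < cross2 u w₁) :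
    MonotoneOn (fun t : ℝ => InnerProductGeometry.angle u ((1 - t) • w₀ + t • w₁)) (Icc 0 1) ∨
      AntitoneOn (fun t : ℝ => InnerProductGeometry.angle u ((1 - t) • w₀ + t • w₁))
        (Icc 0 1) := by
  have hpos : ∀ t ∈ Icc (0 : ℝ) 1, 0 < (1 - t) * cross2 u w₀ + t * cross2 u w₁ :=
    fun t ⟨ht₀, ht₁⟩ => by nlinarith [mul_nonneg ht₀ h₁.le, mul_nonneg (sub_nonneg.2 ht₁) h₀.le]
  have heq : EqOn
      (fun t => π / 2 - arctan (((1 - t) * ⟪u, w₀⟫_ℝ + t * ⟪u, w₁⟫_ℝ) /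
        ((1 - t) * cross2 u w₀ + t * cross2 u w₁)))
      (fun t => InnerProductGeometry.angle u ((1 - t) • w₀ + t • w₁)) (Icc 0 1) := fun t ht => by
    dsimp only
    rw [angle_eq_pi_div_two_sub_arctan (by rw [cross2_add_smul_right]; exact hpos t ht),
      cross2_add_smul_right, inner_add_right, real_inner_smul_right, real_inner_smul_right]
  have hanti : Antitone fun x : ℝ => π / 2 - arctan x :=
    fun _ _ hxy => sub_le_sub_left (arctan_strictMono.monotone hxy) _
  rcases monotoneOn_or_antitoneOn_affine_div_affine hpos with h | h
  · exact .inr ((hanti.comp_monotoneOn h).congr heq)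
  · exact .inl ((hanti.comp_antitoneOn h).congr heq)

theorem sbtw_one_sub_smul_add_smul {R V : Type*} [Ring R] [PartialOrder R] [IsOrderedRing R]
    [IsDomain R] [AddCommGroup V] [Module R V] [Module.IsTorsionFree R V] {x y : V} {t : R}
    (hxy : x ≠ y) (ht : t ∈ Ioo 0 1) : Sbtw R x ((1 - t) • x + t • y) y := by
  rw [← AffineMap.lineMap_apply_module]
  exact sbtw_lineMap_iff.2 ⟨hxy, ht⟩

section Cut

variable {V P : Type*} [NormedAddCommGroup V] [InnerProductSpace ℝ V] [MetricSpace P]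
  [NormedAddTorsor V P]

theorem angle_sub_sub_eq_pi_sub_angle (a b c : V) :
    InnerProductGeometry.angle (b - a) (c - b) = π - ∠ a b c := by
  rw [EuclideanGeometry.angle, vsub_eq_sub, vsub_eq_sub, ← neg_sub a b,
    InnerProductGeometry.angle_neg_left]

theorem Sbtw.angle_eq_angle_vsub {x y z : P} (w : P) (h : Sbtw ℝ x y z) :
    ∠ w y z = InnerProductGeometry.angle (w -ᵥ y) (z -ᵥ x) := by
  obtain ⟨⟨r, ⟨-, hr₁⟩, rfl⟩, -, hyz⟩ := h
  have hr : r < 1 := hr₁.lt_of_ne (by rintro rfl; simp at hyz)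
  rw [EuclideanGeometry.angle, AffineMap.right_vsub_lineMap,
    InnerProductGeometry.angle_smul_right_of_pos _ _ (sub_pos.2 hr)]

theorem angles_mem_of_cut {S : Set ℝ} (hS : ∀ x ∈ S, π - x ∈ S) {a b c d p q : P}
    (hp : Sbtw ℝ a p b) (hq : Sbtw ℝ d q c)
    (hda : ∠ d a b ∈ S) (hab : ∠ a b c ∈ S) (hbc : ∠ b c d ∈ S) (hcd : ∠ c d a ∈ S)
    (hqpb : ∠ q p b ∈ S) (hpqd : ∠ p q d ∈ S) :
    (∠ d a p ∈ S ∧ ∠ a p q ∈ S ∧ ∠ p q d ∈ S ∧ ∠ q d a ∈ S) ∧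
      (∠ q p b ∈ S ∧ ∠ p b c ∈ S ∧ ∠ b c q ∈ S ∧ ∠ c q p ∈ S) := by
  have hapq : ∠ a p q = π - ∠ q p b := by
    linarith [angle_add_angle_eq_pi_of_angle_eq_pi q hp.angle₁₂₃_eq_pi, angle_comm a p q]
  have hcqp : ∠ c q p = π - ∠ p q d := by
    linarith [angle_add_angle_eq_pi_of_angle_eq_pi p hq.angle₁₂₃_eq_pi, angle_comm c q p]
  rw [hp.angle_eq_right d, hp.symm.angle_eq_left c, hq.symm.angle_eq_right b,
    hq.angle_eq_left a, hapq, hcqp]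
  exact ⟨⟨hda, hS _ hqpb, hpqd, hcd⟩, hqpb, hab, hbc, hS _ hpqd⟩

end Cut

/-- For a convex quadrilateral a b c d (counterclockwise), the angle between side [a,b]
and the propagation segment I_t from a_t = (1−t)a+tb to c_t = (1−t)d+tc is monotone in t.
Consequently if all four angles of the quadrilateral are within θ of 90°, then cutting
along any I_t (0 < t < 1) produces two sub-quadrilaterals all of whose angles are also
within θ of 90°. -/
theorem propagation_angle_monotone_and_nice
    (a b c d : EuclideanSpace ℝ (Fin 2)) (θ : ℝ)
    (h1 : 0 < cross2 (b - a) (c - b)) (h2 : 0 < cross2 (c - b) (d - c))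
    (h3 : 0 < cross2 (d - c) (a - d)) (h4 : 0 < cross2 (a - d) (b - a)) :
    (MonotoneOn
        (fun t : ℝ => InnerProductGeometry.angle (b - a)
          (((1 - t) • d + t • c) - ((1 - t) • a + t • b))) (Set.Icc 0 1) ∨
      AntitoneOn
        (fun t : ℝ => InnerProductGeometry.angle (b - a)
          (((1 - t) • d + t • c) - ((1 - t) • a + t • b))) (Set.Icc 0 1)) ∧
    ((∠ d a b ∈ Set.Icc (π / 2 - θ) (π / 2 + θ) ∧
      ∠ a b c ∈ Set.Icc (π / 2 - θ) (π / 2 + θ) ∧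
      ∠ b c d ∈ Set.Icc (π / 2 - θ) (π / 2 + θ) ∧
      ∠ c d a ∈ Set.Icc (π / 2 - θ) (π / 2 + θ)) →
      ∀ t ∈ Set.Ioo (0 : ℝ) 1,
        (∠ d a ((1 - t) • a + t • b) ∈ Set.Icc (π / 2 - θ) (π / 2 + θ) ∧
         ∠ a ((1 - t) • a + t • b) ((1 - t) • d + t • c) ∈ Set.Icc (π / 2 - θ) (π / 2 + θ) ∧
         ∠ ((1 - t) • a + t • b) ((1 - t) • d + t • c) d ∈ Set.Icc (π / 2 - θ) (π / 2 + θ) ∧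
         ∠ ((1 - t) • d + t • c) d a ∈ Set.Icc (π / 2 - θ) (π / 2 + θ)) ∧
        (∠ ((1 - t) • d + t • c) ((1 - t) • a + t • b) b ∈ Set.Icc (π / 2 - θ) (π / 2 + θ) ∧
         ∠ ((1 - t) • a + t • b) b c ∈ Set.Icc (π / 2 - θ) (π / 2 + θ) ∧
         ∠ b c ((1 - t) • d + t • c) ∈ Set.Icc (π / 2 - θ) (π / 2 + θ) ∧
         ∠ c ((1 - t) • d + t • c) ((1 - t) • a + t • b) ∈ Set.Icc (π / 2 - θ) (π / 2 + θ))) := by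
  have hv (t : ℝ) : ((1 - t) • d + t • c) - ((1 - t) • a + t • b) =
      (1 - t) • (d - a) + t • (c - b) := by module
  have hv' (t : ℝ) : ((1 - t) • a + t • b) - ((1 - t) • d + t • c) =
      (1 - t) • (a - d) + t • (b - c) := by module
  have hf := monotoneOn_or_antitoneOn_angle_segment (u := b - a) (w₀ := d - a) (w₁ := c - b)
    (by rwa [cross2_eq_cross2_neg, neg_sub]) h1
  have hg := monotoneOn_or_antitoneOn_angle_segment (u := d - c) (w₀ := a - d) (w₁ := b - c)
    h3 (by rwa [cross2_eq_cross2_neg, neg_sub])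
  simp only [hv]
  refine ⟨hf, ?_⟩
  rintro ⟨hda, hab, hbc, hcd⟩ t ht
  set S := Icc (π / 2 - θ) (π / 2 + θ)
  have hS : ∀ x ∈ S, π - x ∈ S := fun x hx => ⟨by linarith [hx.2], by linarith [hx.1]⟩
  have htI : t ∈ Icc (0 : ℝ) 1 := Ioo_subset_Icc_self ht
  have hfS := mem_of_monotoneOn_or_antitoneOn_Icc (S := S) hf htI
    (by simpa [EuclideanGeometry.angle, InnerProductGeometry.angle_comm] using hda)
    (by simpa [angle_sub_sub_eq_pi_sub_angle] using hS _ hab)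
  have hgS := mem_of_monotoneOn_or_antitoneOn_Icc (S := S) hg htI
    (by simpa [angle_sub_sub_eq_pi_sub_angle] using hS _ hcd)
    (by simpa [EuclideanGeometry.angle, InnerProductGeometry.angle_comm] using hbc)
  have hp := sbtw_one_sub_smul_add_smul (x := a) (y := b) (by rintro rfl; simp [cross2] at h1) ht
  have hq := sbtw_one_sub_smul_add_smul (x := d) (y := c) (by rintro rfl; simp [cross2] at h2) ht
  refine angles_mem_of_cut hS hp hq hda hab hbc hcd ?_ ?_
  · rw [hp.angle_eq_angle_vsub, InnerProductGeometry.angle_comm, vsub_eq_sub, vsub_eq_sub, hv]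
    exact hfS
  · rw [hq.symm.angle_eq_angle_vsub, InnerProductGeometry.angle_comm, vsub_eq_sub, vsub_eq_sub,
      hv']
    exact hgS
end

section
/- Let Q be a tube of length L = ℓ(Q) that is split by its center path into two parallel sub-tubes Q_1 and Q_2. Then ℓ(Q) ≤ ℓ(Q_1), and the minimal-length of Q_1 satisfies ℓ(Q) ≤ 4·ℓ̃(Q_1). -/
theorem Finset.sum_add_div_two {α ι : Type*} [DivisionSemiring α] (s : Finset ι) (f g : ι → α) :
    ∑ i ∈ s, (f i + g i) / 2 = ((∑ i ∈ s, f i) + ∑ i ∈ s, g i) / 2 := by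
  rw [← Finset.sum_div, Finset.sum_add_distrib]

section OrderedField

variable {α : Type*} [Field α] [LinearOrder α] [IsStrictOrderedRing α]

theorem min_le_min_add_div_two (x y : α) : min x y ≤ min x ((x + y) / 2) :=
  le_min (min_le_left x y) <| by
    have hx := min_le_left x y
    have hy := min_le_right x y
    linarith

theorem div_two_le_min_add_div_two {x y : α} (hx : 0 ≤ x) (hy : 0 ≤ y) :
    x / 2 ≤ min x ((x + y) / 2) :=
  le_min (by linarith) (by linarith)

end OrderedField

/-- Piece `j` of the tube `Q` has base lengths `a j` and `b j`; the sub-tube `Q₁` between the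
`a`-boundary and the center path has base lengths `a j` and `(a j + b j) / 2`. -/
theorem split_tube_lengths_general (p : ℕ) (a b : Fin p → ℝ)
    (ha : ∀ j, 0 ≤ a j) (hb : ∀ j, 0 ≤ b j) :
    min (∑ j, a j) (∑ j, b j) ≤ min (∑ j, a j) (∑ j, (a j + b j) / 2) ∧
    min (∑ j, a j) (∑ j, b j) ≤ 4 * ∑ j, min (a j) ((a j + b j) / 2) := by
  constructor
  · rw [Finset.sum_add_div_two]
    exact min_le_min_add_div_two _ _
  · have hhalf : (∑ j, a j) / 2 ≤ ∑ j, min (a j) ((a j + b j) / 2) := by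
      rw [Finset.sum_div]
      exact Finset.sum_le_sum fun j _ => div_two_le_min_add_div_two (ha j) (hb j)
    have hA : 0 ≤ ∑ j, a j := Finset.sum_nonneg fun j _ => ha j
    calc min (∑ j, a j) (∑ j, b j) ≤ ∑ j, a j := min_le_left _ _
      _ ≤ 4 * ((∑ j, a j) / 2) := by linarith
      _ ≤ 4 * ∑ j, min (a j) ((a j + b j) / 2) := by gcongr

/-- A tube Q with pieces whose two base lengths are a_j, b_j has length
ℓ(Q) = min(∑a, ∑b).  Splitting Q by its center path, the sub-tube Q₁ (between the
a-boundary and the center path) has bases a_j and (a_j+b_j)/2, so its length is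
min(∑a, ∑(a+b)/2) and its minimal-length is ∑ min(a_j,(a_j+b_j)/2).  Then
ℓ(Q) ≤ ℓ(Q₁) and ℓ(Q) ≤ 4·ℓ̃(Q₁). -/
theorem split_tube_lengths (p : ℕ) (hp : 0 < p) (a b : Fin p → ℝ)
    (ha : ∀ j, 0 ≤ a j) (hb : ∀ j, 0 ≤ b j) :
    min (∑ j, a j) (∑ j, b j) ≤ min (∑ j, a j) (∑ j, (a j + b j) / 2) ∧
    min (∑ j, a j) (∑ j, b j) ≤ 4 * ∑ j, min (a j) ((a j + b j) / 2) :=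
  split_tube_lengths_general p a b ha hb
end
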